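/- Let f : [0,T] → ℝ≥0 be continuous and suppose f(t) ≤ ∫₀ᵗ (a + (b/√s)·f(s)^{1/2}) ds for all t ∈ [0,T], where a, b > 0. Then f(t) ≤ c·t for all t ∈ [0,T], where c is the unique positive solution of c = a + b·c^{1/2}. -/
import Mathlib


open MeasureTheory intervalIntegral

/-- If `y ≤ a + B√y` then `y ≤ (a+B+1)²`. -/
lemma quad_aux (a B y : ℝ) (ha : 0 < a) (hB : 0 < B) (hy : 0 ≤ y)
    (h : y ≤ a + B * Real.sqrt y) : y ≤ (a + B + 1) ^ 2 := by
  by_contra hcon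
  push_neg at hcon
  have hs : a + B + 1 ≤ Real.sqrt y := by
    have h1 : Real.sqrt ((a + B + 1) ^ 2) ≤ Real.sqrt y := Real.sqrt_le_sqrt hcon.le
    rwa [Real.sqrt_sq (by positivity)] at h1
  have hss : Real.sqrt y * Real.sqrt y = y := Real.mul_self_sqrt hy
  nlinarith [Real.sqrt_nonneg y, mul_nonneg (sub_nonneg.mpr hs) (Real.sqrt_nonneg y)]

/-- If `c` is the fixed point and `c ≤ x`, then `a + b√x ≤ x`. -/
lemma fix_aux (a b c x : ℝ) (ha : 0 < a) (hb : 0 < b) (hc : 0 < c)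
    (hceq : c = a + b * Real.sqrt c) (hx : c ≤ x) : a + b * Real.sqrt x ≤ x := by
  have h0 : Real.sqrt c ≤ Real.sqrt x := Real.sqrt_le_sqrt hx
  have hsc : Real.sqrt c * Real.sqrt c = c := Real.mul_self_sqrt hc.le
  have hsx : Real.sqrt x * Real.sqrt x = x := Real.mul_self_sqrt (hc.le.trans hx)
  have hscpos : 0 < Real.sqrt c := Real.sqrt_pos.mpr hc
  have hbs : b < Real.sqrt c := by nlinarith
  nlinarith [mul_nonneg (sub_nonneg.mpr h0) (by nlinarith :
    (0:ℝ) ≤ Real.sqrt x + Real.sqrt c - b)]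

/-- Grönwall-type lemma: if a continuous nonnegative `f` on `[0,T]` satisfies
`f t ≤ ∫₀ᵗ (a + b/√s · √(f s)) ds`, then `f t ≤ c·t`, where `c` is the unique
positive solution of `c = a + b·√c`. -/
theorem gronwall_type (T a b c : ℝ) (hT : 0 < T) (ha : 0 < a) (hb : 0 < b)
    (hc : 0 < c) (hceq : c = a + b * Real.sqrt c)
    (hcuniq : ∀ c' : ℝ, 0 < c' → c' = a + b * Real.sqrt c' → c' = c)
    (f : ℝ → ℝ) (hf : ContinuousOn f (Set.Icc 0 T))
    (hfnonneg : ∀ t ∈ Set.Icc 0 T, 0 ≤ f t)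
    (hineq : ∀ t ∈ Set.Icc 0 T,
      f t ≤ ∫ s in (0:ℝ)..t, (a + b / Real.sqrt s * Real.sqrt (f s))) :
    ∀ t ∈ Set.Icc 0 T, f t ≤ c * t := by
  -- Step lemma: a linear bound `d·s` improves to `(a + b√d)·t`.
  have step : ∀ d : ℝ, 0 ≤ d → (∀ s ∈ Set.Icc (0:ℝ) T, f s ≤ d * s) →
      ∀ t ∈ Set.Icc (0:ℝ) T, f t ≤ (a + b * Real.sqrt d) * t := by
    intro d hd hfd t ht
    have h1 := hineq t ht
    by_cases hint : IntervalIntegrable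
        (fun s => a + b / Real.sqrt s * Real.sqrt (f s)) volume 0 t
    · have h2 : (∫ s in (0:ℝ)..t, (a + b / Real.sqrt s * Real.sqrt (f s)))
          ≤ ∫ _s in (0:ℝ)..t, (a + b * Real.sqrt d) := by
        apply intervalIntegral.integral_mono_on ht.1 hint intervalIntegrable_const
        intro s hs
        rcases eq_or_lt_of_le hs.1 with h0 | h0
        · rw [← h0]
          simp only [Real.sqrt_zero, div_zero, zero_mul, add_zero]
          nlinarith [Real.sqrt_nonneg d]
        · have hsq : Real.sqrt (f s) ≤ Real.sqrt d * Real.sqrt s := by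
            rw [← Real.sqrt_mul hd]
            exact Real.sqrt_le_sqrt (hfd s ⟨hs.1, hs.2.trans ht.2⟩)
          have hsp : 0 < Real.sqrt s := Real.sqrt_pos.mpr h0
          have h3 : b / Real.sqrt s * Real.sqrt (f s)
              ≤ b / Real.sqrt s * (Real.sqrt d * Real.sqrt s) :=
            mul_le_mul_of_nonneg_left hsq (by positivity)
          have e : b / Real.sqrt s * (Real.sqrt d * Real.sqrt s) = b * Real.sqrt d := by
            field_simp
          rw [e] at h3
          linarith
      have h3 : (∫ _s in (0:ℝ)..t, (a + b * Real.sqrt d)) = (a + b * Real.sqrt d) * t := by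
        rw [intervalIntegral.integral_const, smul_eq_mul, sub_zero, mul_comm]
      linarith
    · rw [intervalIntegral.integral_undef hint] at h1
      have : 0 ≤ (a + b * Real.sqrt d) * t :=
        mul_nonneg (by positivity) ht.1
      linarith
  -- Initial linear bound with constant `(a + 2b + 1)²`.
  have init : ∀ t ∈ Set.Icc (0:ℝ) T, f t ≤ (a + 2*b + 1) ^ 2 * t := by
    intro t ht
    rcases eq_or_lt_of_le ht.1 with h0 | h0
    · have h1 := hineq t ht
      rw [← h0] at h1 ⊢
      rw [intervalIntegral.integral_same] at h1
      linarith
    · obtain ⟨s₀, hs₀mem, hmax⟩ := isCompact_Icc.exists_isMaxOn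
        (Set.nonempty_Icc.mpr h0.le) (hf.mono (Set.Icc_subset_Icc le_rfl ht.2))
      set K := f s₀ with hKdef
      have hK0 : 0 ≤ K := hfnonneg s₀ ⟨hs₀mem.1, hs₀mem.2.trans ht.2⟩
      have hbound : ∀ s ∈ Set.Icc (0:ℝ) t,
          f s ≤ a * t + 2 * b * Real.sqrt K * Real.sqrt t := by
        intro s hs
        have hsT : s ∈ Set.Icc (0:ℝ) T := ⟨hs.1, hs.2.trans ht.2⟩
        have h1 := hineq s hsT
        have hRHSpos : 0 ≤ a * t + 2 * b * Real.sqrt K * Real.sqrt t := by positivity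
        by_cases hint : IntervalIntegrable
            (fun r => a + b / Real.sqrt r * Real.sqrt (f r)) volume 0 s
        · have hrint : IntervalIntegrable
              (fun r : ℝ => b * Real.sqrt K * r ^ (-(1/2) : ℝ)) volume 0 s :=
            (intervalIntegral.intervalIntegrable_rpow' (by norm_num)).const_mul _
          have hgint : IntervalIntegrable
              (fun r : ℝ => a + b * Real.sqrt K * r ^ (-(1/2) : ℝ)) volume 0 s :=
            intervalIntegrable_const.add hrint
          have h2 : (∫ r in (0:ℝ)..s, (a + b / Real.sqrt r * Real.sqrt (f r)))
              ≤ ∫ r in (0:ℝ)..s, (a + b * Real.sqrt K * r ^ (-(1/2) : ℝ)) := by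
            apply intervalIntegral.integral_mono_on hs.1 hint hgint
            intro r hr
            rcases eq_or_lt_of_le hr.1 with hr0 | hr0
            · rw [← hr0]
              rw [Real.zero_rpow (by norm_num)]
              simp
            · have hrpow : (r : ℝ) ^ (-(1/2) : ℝ) = 1 / Real.sqrt r := by
                rw [Real.rpow_neg hr0.le, Real.sqrt_eq_rpow]
                exact (one_div _).symm
              have hfr : Real.sqrt (f r) ≤ Real.sqrt K :=
                Real.sqrt_le_sqrt (hmax ⟨hr.1, hr.2.trans hs.2⟩)
              have hrp : 0 < Real.sqrt r := Real.sqrt_pos.mpr hr0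
              rw [hrpow]
              have h3 : b / Real.sqrt r * Real.sqrt (f r)
                  ≤ b / Real.sqrt r * Real.sqrt K :=
                mul_le_mul_of_nonneg_left hfr (by positivity)
              have e : b * Real.sqrt K * (1 / Real.sqrt r)
                  = b / Real.sqrt r * Real.sqrt K := by ring
              rw [e]
              linarith
          have h3 : (∫ r in (0:ℝ)..s, (a + b * Real.sqrt K * r ^ (-(1/2) : ℝ)))
              = a * s + b * Real.sqrt K * (2 * Real.sqrt s) := by
            rw [intervalIntegral.integral_add intervalIntegrable_const hrint,
              intervalIntegral.integral_const, intervalIntegral.integral_const_mul,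
              integral_rpow (Or.inl (by norm_num))]
            have e1 : (-(1/2) : ℝ) + 1 = 1/2 := by norm_num
            rw [e1, Real.zero_rpow (by norm_num), ← Real.sqrt_eq_rpow]
            rw [smul_eq_mul, sub_zero, sub_zero]
            ring
          have hsle : Real.sqrt s ≤ Real.sqrt t := Real.sqrt_le_sqrt hs.2
          have h4 : a * s + b * Real.sqrt K * (2 * Real.sqrt s)
              ≤ a * t + 2 * b * Real.sqrt K * Real.sqrt t := by
            have p1 : 0 ≤ a * (t - s) := mul_nonneg ha.le (by linarith [hs.2])
            have p2 : 0 ≤ b * Real.sqrt K * (Real.sqrt t - Real.sqrt s) :=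
              mul_nonneg (mul_nonneg hb.le (Real.sqrt_nonneg K)) (by linarith)
            nlinarith [p1, p2]
          linarith
        · rw [intervalIntegral.integral_undef hint] at h1
          linarith
      have hKle : K ≤ a * t + 2 * b * Real.sqrt K * Real.sqrt t := hbound s₀ hs₀mem
      have hts : Real.sqrt t * Real.sqrt t = t := Real.mul_self_sqrt h0.le
      have htsp : 0 < Real.sqrt t := Real.sqrt_pos.mpr h0
      have hdiv : K / t ≤ a + (2*b) * Real.sqrt (K / t) := by
        rw [div_le_iff₀ h0]
        rw [Real.sqrt_div hK0]
        have e2 : Real.sqrt K / Real.sqrt t * t = Real.sqrt K * Real.sqrt t := by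
          rw [div_mul_eq_mul_div, mul_div_assoc, Real.div_sqrt]
        have e3 : (a + 2*b * (Real.sqrt K / Real.sqrt t)) * t
            = a * t + 2 * b * (Real.sqrt K / Real.sqrt t * t) := by ring
        rw [e3, e2]
        linarith
      have hquad := quad_aux a (2*b) (K / t) ha (by linarith) (by positivity) hdiv
      have hft : f t ≤ K := hmax ⟨h0.le, le_rfl⟩
      have : K ≤ (a + 2*b + 1) ^ 2 * t := by
        rw [div_le_iff₀ h0] at hquad
        linarith
      linarith
  -- Iterate the map `g x = a + b√x` starting from `(a+2b+1)²`.
  set g : ℝ → ℝ := fun x => a + b * Real.sqrt x with hgdef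
  set d : ℕ → ℝ := fun n => g^[n] ((a + 2*b + 1) ^ 2) with hddef
  have hd0 : d 0 = (a + 2*b + 1) ^ 2 := rfl
  have hdsucc : ∀ n, d (n+1) = a + b * Real.sqrt (d n) := by
    intro n
    show g^[n+1] _ = _
    rw [Function.iterate_succ_apply' g n]
  have hcd : ∀ n, c ≤ d n := by
    intro n
    induction n with
    | zero =>
      rw [hd0]
      exact quad_aux a (2*b) c ha (by linarith) hc.le
        (by nlinarith [Real.sqrt_nonneg c, Real.sqrt_nonneg c])
    | succ n ih =>
      rw [hdsucc]
      have h1 : Real.sqrt c ≤ Real.sqrt (d n) := Real.sqrt_le_sqrt ih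
      nlinarith
  have hfdn : ∀ n, ∀ t ∈ Set.Icc (0:ℝ) T, f t ≤ d n * t := by
    intro n
    induction n with
    | zero => rw [hd0]; exact init
    | succ n ih =>
      intro t ht
      have h1 := step (d n) (hc.le.trans (hcd n)) ih t ht
      rw [hdsucc]
      exact h1
  have hanti : Antitone d := antitone_nat_of_succ_le (fun n => by
    rw [hdsucc]
    exact fix_aux a b c (d n) ha hb hc hceq (hcd n))
  have hbdd : BddBelow (Set.range d) := ⟨c, by rintro _ ⟨n, rfl⟩; exact hcd n⟩
  have htend : Filter.Tendsto d Filter.atTop (nhds (⨅ n, d n)) :=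
    tendsto_atTop_ciInf hanti hbdd
  set L := ⨅ n, d n with hLdef
  have hcL : c ≤ L := le_ciInf hcd
  have hLfix : L = a + b * Real.sqrt L := by
    have h1 : Filter.Tendsto (fun n => d (n+1)) Filter.atTop (nhds L) :=
      htend.comp (Filter.tendsto_add_atTop_nat 1)
    have h2 : Filter.Tendsto (fun n => a + b * Real.sqrt (d n)) Filter.atTop
        (nhds (a + b * Real.sqrt L)) :=
      Filter.Tendsto.add tendsto_const_nhds
        (Filter.Tendsto.const_mul b ((Real.continuous_sqrt.tendsto L).comp htend))
    have h3 : (fun n => d (n+1)) = fun n => a + b * Real.sqrt (d n) := funext hdsucc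
    rw [h3] at h1
    exact tendsto_nhds_unique h1 h2
  have hLc : L = c := hcuniq L (lt_of_lt_of_le hc hcL) hLfix
  intro t ht
  have htendt : Filter.Tendsto (fun n => d n * t) Filter.atTop (nhds (L * t)) :=
    htend.mul_const t
  rw [hLc] at htendt
  exact ge_of_tendsto' htendt (fun n => hfdn n t ht)
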